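/- Let T1 = T(a1/b1, c1/d1) and T2 = T(a2/b2, c2/d2) be equivalent trees, where each of a1/b1, c1/d1, a2/b2, c2/d2 is a nonnegative fraction in lowest terms with a1/b1 ≤ c1/d1 and a2/b2 ≤ c2/d2. Then corresponding elements are the same weighted combination of their tree's initial terms: for every n and every index j, writing e1 for the j-th entry of S(n)(a1/b1, c1/d1) and e2 for the j-th entry of S(n)(a2/b2, c2/d2), there exist nonnegative integers x, y, not both zero, with gcd(x,y) = 1, and a positive integer g, such that g = gcd(a1·x + c1·y, b1·x + d1·y), num(e1)·g = a1·x + c1·y, den(e1)·g = b1·x + d1·y, and also g = gcd(a2·x + c2·y, b2·x + d2·y), num(e2)·g = a2·x + c2·y, den(e2)·g = b2·x + d2·y. -/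

import Mathlib

/-!
Every entry `e` of `T(a/b, c/d)` can be written as `num e = a ξ + c η`, `den e = b ξ + d η`
with rational weights `ξ, η ≥ 0`: the two roots carry `(1, 0)` and `(0, 1)`, and the mediant of
`p` and `q` carries `(w p + w q) / G`, where `G` is the factor by which `num p + num q` and
`den p + den q` are reduced. In equivalent trees these factors agree position by position, so by
induction on the row corresponding entries carry the same weights. Writing the common weight
vector as `t • (x, y)` with `x, y` coprime naturals, `num e / den e` is the reduced form of
`(a x + c y) / (b x + d y)`, which forces `t * gcd (a x + c y) (b x + d y) = 1` in both trees, so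
the two gcds coincide.
-/

/-- The mediant of two rationals `p` and `q`: `(num p + num q) / (den p + den q)`. -/
def mediant (p q : ℚ) : ℚ := ((p.num + q.num : ℤ) : ℚ) / ((p.den + q.den : ℕ) : ℚ)

/-- Insert between every pair of consecutive entries of a list their mediant. -/
def insertMediants : List ℚ → List ℚ
  | [] => []
  | [p] => [p]
  | p :: q :: rest => p :: mediant p q :: insertMediants (q :: rest)

/-- The sequences of the tree `T(r, s)`: `S r s 0 = [r, s]`, and each successive
sequence is obtained by inserting mediants between consecutive entries. -/
def S (r s : ℚ) : ℕ → List ℚ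
  | 0 => [r, s]
  | n + 1 => insertMediants (S r s n)


/-- Two trees `T(r1, s1)` and `T(r2, s2)` are equivalent if the mediant inserted at each
position reduces by exactly the same factor in both trees: for every row `n` and every
`j`-th consecutive pair `(p, q)` of `S r1 s1 n` and `(p', q')` of `S r2 s2 n`,
`gcd (num p + num q) (den p + den q) = gcd (num p' + num q') (den p' + den q')`. -/
def TreesEquiv (r1 s1 r2 s2 : ℚ) : Prop :=
  ∀ n j, (h1 : j + 1 < (S r1 s1 n).length) → (h2 : j + 1 < (S r2 s2 n).length) →
    Int.gcd ((S r1 s1 n)[j].num + (S r1 s1 n)[j + 1].num)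
            (((S r1 s1 n)[j].den : ℤ) + ((S r1 s1 n)[j + 1].den : ℤ)) =
    Int.gcd ((S r2 s2 n)[j].num + (S r2 s2 n)[j + 1].num)
            (((S r2 s2 n)[j].den : ℤ) + ((S r2 s2 n)[j + 1].den : ℤ))

theorem insertMediants_length : ∀ l : List ℚ, (insertMediants l).length = 2 * l.length - 1
  | [] | [_] => rfl
  | _ :: q :: rest => by
    simp only [insertMediants, List.length_cons, insertMediants_length (q :: rest)]
    omega

theorem getElem_insertMediants_two_mul : ∀ (l : List ℚ) (k : ℕ)
    (h : 2 * k < (insertMediants l).length),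
    (insertMediants l)[2 * k] = l[k]'(by rw [insertMediants_length] at h; omega)
  | [_], 0, _ | _ :: _ :: _, 0, _ => rfl
  | p :: q :: rest, k + 1, h => by
    simp only [insertMediants, List.length_cons] at h
    exact getElem_insertMediants_two_mul (q :: rest) k (by omega)

theorem getElem_insertMediants_two_mul_add_one : ∀ (l : List ℚ) (k : ℕ)
    (h : 2 * k + 1 < (insertMediants l).length),
    (insertMediants l)[2 * k + 1] =
      mediant (l[k]'(by rw [insertMediants_length] at h; omega))
        (l[k + 1]'(by rw [insertMediants_length] at h; omega))
  | _ :: _ :: _, 0, _ => rfl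
  | p :: q :: rest, k + 1, h => by
    simp only [insertMediants, List.length_cons] at h
    exact getElem_insertMediants_two_mul_add_one (q :: rest) k (by omega)

theorem Rat.num_intCast_div_natCast_mul_gcd (n : ℤ) {d : ℕ} (hd : d ≠ 0) :
    ((n : ℚ) / d).num * Int.gcd n d = n := by
  rw [← Rat.mkRat_eq_div, Rat.num_mkRat, if_neg hd, Nat.gcd_comm]
  exact Int.ediv_mul_cancel (Int.gcd_dvd_left n d)

theorem Rat.den_intCast_div_natCast_mul_gcd (n : ℤ) {d : ℕ} (hd : d ≠ 0) :
    ((n : ℚ) / d).den * Int.gcd n d = d := by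
  rw [← Rat.mkRat_eq_div, Rat.den_mkRat, if_neg hd, Nat.gcd_comm]
  exact Nat.div_mul_cancel (Nat.gcd_dvd_right _ _)

theorem Rat.exists_coprime_mul_natCast {ξ η : ℚ} (hξ : 0 ≤ ξ) (hη : 0 ≤ η) :
    ∃ x y : ℕ, x.Coprime y ∧ ∃ t : ℚ, ξ = t * x ∧ η = t * y := by
  have clear_den {q : ℚ} (hq : 0 ≤ q) (m : ℕ) :
      q * (q.den * m) = ((q.num.toNat * m : ℕ) : ℚ) := by
    have : ((q.num.toNat : ℕ) : ℚ) = q.num := by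
      rw [← Int.cast_natCast, Int.toNat_of_nonneg (Rat.num_nonneg.2 hq)]
    rw [Nat.cast_mul, this, ← mul_assoc, Rat.mul_den_eq_num]
  obtain ⟨x, y, hxy, hX, hY⟩ :=
    Nat.exists_coprime (ξ.num.toNat * η.den) (η.num.toNat * ξ.den)
  set g := Nat.gcd (ξ.num.toNat * η.den) (η.num.toNat * ξ.den)
  refine ⟨x, y, hxy, g / (ξ.den * η.den), ?_, ?_⟩
  · have := clear_den hξ η.den
    rw [hX] at this
    field_simp
    push_cast at this
    linear_combination this
  · have := clear_den hη ξ.den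
    rw [hY] at this
    field_simp
    push_cast at this
    linear_combination this

def HasWeights (a b c d : ℕ) (e ξ η : ℚ) : Prop :=
  0 ≤ ξ ∧ 0 ≤ η ∧ (e.num : ℚ) = a * ξ + c * η ∧ (e.den : ℚ) = b * ξ + d * η

theorem hasWeights_div_left {a b : ℕ} (c d : ℕ) (hb : b ≠ 0) (hab : a.Coprime b) :
    HasWeights a b c d (a / b) 1 0 := by
  have hnum := Rat.num_intCast_div_natCast_mul_gcd a hb
  have hden := Rat.den_intCast_div_natCast_mul_gcd a hb
  simp only [Int.gcd_natCast_natCast, hab.gcd_eq_one, Nat.cast_one, mul_one,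
    Int.cast_natCast] at hnum hden
  exact ⟨zero_le_one, le_rfl, by simp [hnum], by simp [hden]⟩

theorem hasWeights_div_right (a b : ℕ) {c d : ℕ} (hd : d ≠ 0) (hcd : c.Coprime d) :
    HasWeights a b c d (c / d) 0 1 := by
  have hnum := Rat.num_intCast_div_natCast_mul_gcd c hd
  have hden := Rat.den_intCast_div_natCast_mul_gcd c hd
  simp only [Int.gcd_natCast_natCast, hcd.gcd_eq_one, Nat.cast_one, mul_one,
    Int.cast_natCast] at hnum hden
  exact ⟨le_rfl, zero_le_one, by simp [hnum], by simp [hden]⟩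

section HasWeights

variable {a b c d : ℕ}

theorem HasWeights.mediant {p q ξ₁ η₁ ξ₂ η₂ : ℚ} (hp : HasWeights a b c d p ξ₁ η₁)
    (hq : HasWeights a b c d q ξ₂ η₂) :
    HasWeights a b c d (mediant p q)
      ((ξ₁ + ξ₂) / Int.gcd (p.num + q.num) ((p.den : ℤ) + (q.den : ℤ)))
      ((η₁ + η₂) / Int.gcd (p.num + q.num) ((p.den : ℤ) + (q.den : ℤ))) := by
  obtain ⟨hξ₁, hη₁, hnum₁, hden₁⟩ := hp
  obtain ⟨hξ₂, hη₂, hnum₂, hden₂⟩ := hq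
  set m := _root_.mediant p q
  set G := Int.gcd (p.num + q.num) ((p.den : ℤ) + (q.den : ℤ))
  have hd : p.den + q.den ≠ 0 := by have := p.den_nz; omega
  have hG_eq : G = Int.gcd (p.num + q.num) ((p.den + q.den : ℕ) : ℤ) := by simp [G]
  have hnum : m.num * G = p.num + q.num := by
    rw [hG_eq]; exact Rat.num_intCast_div_natCast_mul_gcd (p.num + q.num) hd
  have hden : m.den * G = p.den + q.den := by
    rw [hG_eq]; exact Rat.den_intCast_div_natCast_mul_gcd (p.num + q.num) hd
  have hG : (G : ℚ) ≠ 0 := Nat.cast_ne_zero.2 (right_ne_zero_of_mul (hden.trans_ne hd))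
  replace hnum : (m.num : ℚ) * G = p.num + q.num := by exact_mod_cast hnum
  replace hden : (m.den : ℚ) * G = p.den + q.den := by exact_mod_cast hden
  refine ⟨by positivity, by positivity, ?_, ?_⟩
  · rw [← mul_div_cancel_right₀ (m.num : ℚ) hG, hnum, hnum₁, hnum₂]
    ring
  · rw [← mul_div_cancel_right₀ (m.den : ℚ) hG, hden, hden₁, hden₂]
    ring

theorem HasWeights.num_den_mul_gcd {e t : ℚ} {x y : ℕ} (h : HasWeights a b c d e (t * x) (t * y)) :
    e.num * Nat.gcd (a * x + c * y) (b * x + d * y) = ((a * x + c * y : ℕ) : ℤ) ∧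
      e.den * Nat.gcd (a * x + c * y) (b * x + d * y) = b * x + d * y ∧
      t * Nat.gcd (a * x + c * y) (b * x + d * y) = 1 := by
  obtain ⟨-, -, hnum, hden⟩ := h
  set A := a * x + c * y
  set B := b * x + d * y
  replace hnum : (e.num : ℚ) = t * A := by rw [hnum]; push_cast [A]; ring
  replace hden : (e.den : ℚ) = t * B := by rw [hden]; push_cast [B]; ring
  have htB : t * B ≠ 0 := hden ▸ Nat.cast_ne_zero.2 e.den_nz
  have hB : B ≠ 0 := by rintro hB; simp [hB] at htB
  have he : e = ((A : ℤ) : ℚ) / B := by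
    rw [← Rat.num_div_den e, hnum, hden, Int.cast_natCast,
      mul_div_mul_left _ _ (left_ne_zero_of_mul htB)]
  have hnum' := Rat.num_intCast_div_natCast_mul_gcd A hB
  have hden' := Rat.den_intCast_div_natCast_mul_gcd A hB
  rw [← he, Int.gcd_natCast_natCast] at hnum' hden'
  refine ⟨hnum', hden', ?_⟩
  apply mul_left_cancel₀ (Nat.cast_ne_zero.2 hB : (B : ℚ) ≠ 0)
  rw [mul_one, ← mul_assoc, mul_comm (B : ℚ), ← hden]
  exact_mod_cast hden'

end HasWeights

theorem TreesEquiv.exists_common_weights {r₁ s₁ r₂ s₂ : ℚ} {a₁ b₁ c₁ d₁ a₂ b₂ c₂ d₂ : ℕ}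
    (hequiv : TreesEquiv r₁ s₁ r₂ s₂)
    (hr₁ : HasWeights a₁ b₁ c₁ d₁ r₁ 1 0) (hs₁ : HasWeights a₁ b₁ c₁ d₁ s₁ 0 1)
    (hr₂ : HasWeights a₂ b₂ c₂ d₂ r₂ 1 0) (hs₂ : HasWeights a₂ b₂ c₂ d₂ s₂ 0 1) (n : ℕ) :
    ∀ j (hj₁ : j < (S r₁ s₁ n).length) (hj₂ : j < (S r₂ s₂ n).length),
      ∃ ξ η, HasWeights a₁ b₁ c₁ d₁ (S r₁ s₁ n)[j] ξ η ∧
        HasWeights a₂ b₂ c₂ d₂ (S r₂ s₂ n)[j] ξ η := by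
  induction n with
  | zero =>
    rintro (_ | _ | j) hj₁ hj₂
    · exact ⟨1, 0, hr₁, hr₂⟩
    · exact ⟨0, 1, hs₁, hs₂⟩
    · simp [S] at hj₁
  | succ n ih =>
    intro j hj₁ hj₂
    have hl₁ := insertMediants_length (S r₁ s₁ n)
    have hl₂ := insertMediants_length (S r₂ s₂ n)
    change j < (insertMediants _).length at hj₁ hj₂
    obtain ⟨k, rfl | rfl⟩ := Nat.even_or_odd' j
    · obtain ⟨ξ, η, h₁, h₂⟩ := ih k (by omega) (by omega)
      refine ⟨ξ, η, ?_, ?_⟩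
      · exact (getElem_insertMediants_two_mul _ k hj₁).symm ▸ h₁
      · exact (getElem_insertMediants_two_mul _ k hj₂).symm ▸ h₂
    · obtain ⟨ξ₁, η₁, hp₁, hp₂⟩ := ih k (by omega) (by omega)
      obtain ⟨ξ₂, η₂, hq₁, hq₂⟩ := ih (k + 1) (by omega) (by omega)
      refine ⟨_, _, (getElem_insertMediants_two_mul_add_one _ k hj₁).symm ▸ hp₁.mediant hq₁, ?_⟩
      rw [hequiv n k (by omega) (by omega)]
      exact (getElem_insertMediants_two_mul_add_one _ k hj₂).symm ▸ hp₂.mediant hq₂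

theorem equiv_trees_corresponding_elements_same_weights_general
    (a1 b1 c1 d1 a2 b2 c2 d2 : ℕ)
    (hb1 : 0 < b1) (hd1 : 0 < d1) (hb2 : 0 < b2) (hd2 : 0 < d2)
    (h1 : Nat.gcd a1 b1 = 1) (h2 : Nat.gcd c1 d1 = 1)
    (h3 : Nat.gcd a2 b2 = 1) (h4 : Nat.gcd c2 d2 = 1)
    (hequiv : TreesEquiv ((a1 : ℚ) / b1) ((c1 : ℚ) / d1) ((a2 : ℚ) / b2) ((c2 : ℚ) / d2))
    (n j : ℕ)
    (hj1 : j < (S ((a1 : ℚ) / b1) ((c1 : ℚ) / d1) n).length)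
    (hj2 : j < (S ((a2 : ℚ) / b2) ((c2 : ℚ) / d2) n).length) :
    ∃ x y g : ℕ, ¬(x = 0 ∧ y = 0) ∧ Nat.gcd x y = 1 ∧ 0 < g ∧
      g = Nat.gcd (a1 * x + c1 * y) (b1 * x + d1 * y) ∧
      (S ((a1 : ℚ) / b1) ((c1 : ℚ) / d1) n)[j].num * (g : ℤ) =
        ((a1 * x + c1 * y : ℕ) : ℤ) ∧
      (S ((a1 : ℚ) / b1) ((c1 : ℚ) / d1) n)[j].den * g = b1 * x + d1 * y ∧
      g = Nat.gcd (a2 * x + c2 * y) (b2 * x + d2 * y) ∧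
      (S ((a2 : ℚ) / b2) ((c2 : ℚ) / d2) n)[j].num * (g : ℤ) =
        ((a2 * x + c2 * y : ℕ) : ℤ) ∧
      (S ((a2 : ℚ) / b2) ((c2 : ℚ) / d2) n)[j].den * g = b2 * x + d2 * y := by
  obtain ⟨ξ, η, hw₁, hw₂⟩ := hequiv.exists_common_weights
    (hasWeights_div_left c1 d1 hb1.ne' h1) (hasWeights_div_right a1 b1 hd1.ne' h2)
    (hasWeights_div_left c2 d2 hb2.ne' h3) (hasWeights_div_right a2 b2 hd2.ne' h4) n j hj1 hj2
  obtain ⟨x, y, hxy, t, rfl, rfl⟩ := Rat.exists_coprime_mul_natCast hw₁.1 hw₁.2.1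
  obtain ⟨hnum₁, hden₁, ht₁⟩ := hw₁.num_den_mul_gcd
  obtain ⟨hnum₂, hden₂, ht₂⟩ := hw₂.num_den_mul_gcd
  have hg : Nat.gcd (a1 * x + c1 * y) (b1 * x + d1 * y) =
      Nat.gcd (a2 * x + c2 * y) (b2 * x + d2 * y) :=
    Nat.cast_injective (mul_left_cancel₀ (left_ne_zero_of_mul_eq_one ht₁) (ht₁.trans ht₂.symm))
  have hg_pos := Nat.pos_of_ne_zero (Nat.cast_ne_zero.1 (right_ne_zero_of_mul_eq_one ht₁))
  refine ⟨x, y, _, ?_, hxy, hg_pos, rfl, hnum₁, hden₁, hg, hg ▸ hnum₂, hg ▸ hden₂⟩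
  rintro ⟨rfl, rfl⟩
  simp at hxy

/-- In equivalent trees, corresponding elements are the same weighted combination of
their respective initial terms: for corresponding entries `e1, e2` there are coprime
weights `(x, y)`, not both zero, and a common reduction factor
`g = gcd (a1 x + c1 y) (b1 x + d1 y) = gcd (a2 x + c2 y) (b2 x + d2 y)` with
`num e1 * g = a1 x + c1 y`, `den e1 * g = b1 x + d1 y`, and similarly for `e2`. -/
theorem equiv_trees_corresponding_elements_same_weights
    (a1 b1 c1 d1 a2 b2 c2 d2 : ℕ)
    (hb1 : 0 < b1) (hd1 : 0 < d1) (hb2 : 0 < b2) (hd2 : 0 < d2)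
    (h1 : Nat.gcd a1 b1 = 1) (h2 : Nat.gcd c1 d1 = 1)
    (h3 : Nat.gcd a2 b2 = 1) (h4 : Nat.gcd c2 d2 = 1)
    (hle1 : (a1 : ℚ) / b1 ≤ (c1 : ℚ) / d1) (hle2 : (a2 : ℚ) / b2 ≤ (c2 : ℚ) / d2)
    (hequiv : TreesEquiv ((a1 : ℚ) / b1) ((c1 : ℚ) / d1) ((a2 : ℚ) / b2) ((c2 : ℚ) / d2))
    (n j : ℕ)
    (hj1 : j < (S ((a1 : ℚ) / b1) ((c1 : ℚ) / d1) n).length)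
    (hj2 : j < (S ((a2 : ℚ) / b2) ((c2 : ℚ) / d2) n).length) :
    ∃ x y g : ℕ, ¬(x = 0 ∧ y = 0) ∧ Nat.gcd x y = 1 ∧ 0 < g ∧
      g = Nat.gcd (a1 * x + c1 * y) (b1 * x + d1 * y) ∧
      (S ((a1 : ℚ) / b1) ((c1 : ℚ) / d1) n)[j].num * (g : ℤ) =
        ((a1 * x + c1 * y : ℕ) : ℤ) ∧
      (S ((a1 : ℚ) / b1) ((c1 : ℚ) / d1) n)[j].den * g = b1 * x + d1 * y ∧
      g = Nat.gcd (a2 * x + c2 * y) (b2 * x + d2 * y) ∧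
      (S ((a2 : ℚ) / b2) ((c2 : ℚ) / d2) n)[j].num * (g : ℤ) =
        ((a2 * x + c2 * y : ℕ) : ℤ) ∧
      (S ((a2 : ℚ) / b2) ((c2 : ℚ) / d2) n)[j].den * g = b2 * x + d2 * y :=
  equiv_trees_corresponding_elements_same_weights_general a1 b1 c1 d1 a2 b2 c2 d2 hb1 hd1 hb2 hd2 h1
    h2 h3 h4 hequiv n j hj1 hj2
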